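/- arXiv:1903.01444 — 2 statements merged into one kernel-verified Lean document; each statement's English description precedes it below -/
import Mathlib

section
/- Let 0 < r < 1 and set s := 2r/(1+r²), L₁ := 2s/(1−s), L₂ := (1+s)/(1−s). For every holomorphic function f on the open unit disc {z ∈ ℂ : |z| < 1} with |f(z)| < 1 for all z in the disc, and for all points z₁, z₂ with |z₁| ≤ r and |z₂| ≤ r, the following two inequalities hold: |f(z₁) − f(z₂)| ≤ L₁·(1 − |f(z₁)|) and 1 − |f(z₂)| ≤ L₂·(1 − |f(z₁)|). -/
/-!
Holomorphic self-maps of the unit disc do not increase the pseudo-hyperbolic distance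
`‖mobius z w‖` (Schwarz–Pick: conjugating `f` by Möbius automorphisms so that it fixes `0`
reduces this to the Schwarz lemma). As `‖1 - conj z * w‖ ≤ 1 + ‖z‖ * ‖w‖`, two points of norm at
most `r` are at distance at most `(‖z‖ + ‖w‖) / (1 + ‖z‖ * ‖w‖) ≤ 2r / (1 + r²) = s`.
For `a = f z₁`, `b = f z₂` this gives `‖a - b‖ ≤ s ‖1 - conj a * b‖ ≤ s (1 - ‖a‖² + ‖a‖ ‖a - b‖)`,
which solves to `‖a - b‖ ≤ s (1 - ‖a‖²) / (1 - s ‖a‖) ≤ 2s / (1 - s) · (1 - ‖a‖)`; the bound on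
`1 - ‖b‖` follows by the triangle inequality.
-/

open Complex ComplexConjugate Metric Set

noncomputable def mobius (a w : ℂ) : ℂ := (w - a) / (1 - conj a * w)

lemma sq_norm_one_sub_conj_mul_sub_sq_norm_sub (a w : ℂ) :
    ‖1 - conj a * w‖ ^ 2 - ‖w - a‖ ^ 2 = (1 - ‖a‖ ^ 2) * (1 - ‖w‖ ^ 2) := by
  simp only [← normSq_eq_norm_sq, normSq_apply, sub_re, sub_im, mul_re, mul_im, conj_re,
    conj_im, one_re, one_im]
  ring

lemma one_sub_conj_mul_ne_zero {a w : ℂ} (ha : ‖a‖ < 1) (hw : ‖w‖ ≤ 1) :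
    1 - conj a * w ≠ 0 := by
  intro h
  have : ‖conj a * w‖ = 1 := by rw [← sub_eq_zero.1 h, norm_one]
  rw [norm_mul, norm_conj] at this
  nlinarith [norm_nonneg w, norm_nonneg a]

lemma norm_mobius_lt_one {a w : ℂ} (ha : ‖a‖ < 1) (hw : ‖w‖ < 1) : ‖mobius a w‖ < 1 := by
  have hden := norm_pos_iff.2 (one_sub_conj_mul_ne_zero ha hw.le)
  rw [mobius, norm_div, div_lt_one hden]
  have hkey := sq_norm_one_sub_conj_mul_sub_sq_norm_sub a w
  have hP : 0 < (1 - ‖a‖ ^ 2) * (1 - ‖w‖ ^ 2) := by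
    apply mul_pos <;> nlinarith [norm_nonneg a, norm_nonneg w]
  nlinarith [norm_nonneg (w - a)]

lemma mapsTo_mobius_ball {a : ℂ} (ha : ‖a‖ < 1) : MapsTo (mobius a) (ball 0 1) (ball 0 1) :=
  fun _ hw ↦ mem_ball_zero_iff.2 (norm_mobius_lt_one ha (mem_ball_zero_iff.1 hw))

lemma differentiableOn_mobius {a : ℂ} (ha : ‖a‖ < 1) :
    DifferentiableOn ℂ (mobius a) (ball 0 1) :=
  (differentiable_id.sub_const a).differentiableOn.div
    ((differentiable_id.const_mul (conj a)).const_sub 1).differentiableOn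
    fun _ hw ↦ one_sub_conj_mul_ne_zero ha (mem_ball_zero_iff.1 hw).le

lemma mobius_self (a : ℂ) : mobius a a = 0 := by simp [mobius]

lemma mobius_neg_zero (a : ℂ) : mobius (-a) 0 = a := by simp [mobius]

lemma mobius_neg_mobius {a w : ℂ} (ha : ‖a‖ < 1) (hw : ‖w‖ < 1) :
    mobius (-a) (mobius a w) = w := by
  have h₁ : 1 - conj a * w ≠ 0 := one_sub_conj_mul_ne_zero ha hw.le
  have h₂ : 1 - conj (-a) * mobius a w ≠ 0 :=
    one_sub_conj_mul_ne_zero (by rwa [norm_neg]) (norm_mobius_lt_one ha hw).le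
  simp only [mobius, map_neg] at h₂ ⊢
  field_simp at h₂ ⊢
  rw [div_eq_iff (div_ne_zero_iff.1 h₂).1]
  ring

theorem norm_mobius_apply_le_of_mapsTo_ball {f : ℂ → ℂ} (hf : DifferentiableOn ℂ f (ball 0 1))
    (hmaps : MapsTo f (ball 0 1) (ball 0 1)) {z w : ℂ} (hz : ‖z‖ < 1) (hw : ‖w‖ < 1) :
    ‖mobius (f z) (f w)‖ ≤ ‖mobius z w‖ := by
  have hfz : ‖f z‖ < 1 := mem_ball_zero_iff.1 (hmaps (mem_ball_zero_iff.2 hz))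
  set g := mobius (f z) ∘ f ∘ mobius (-z)
  have hz' : ‖-z‖ < 1 := by rwa [norm_neg]
  have hgmaps : MapsTo g (ball 0 1) (ball 0 1) :=
    (mapsTo_mobius_ball hfz).comp (hmaps.comp (mapsTo_mobius_ball hz'))
  have hg : DifferentiableOn ℂ g (ball 0 1) :=
    (differentiableOn_mobius hfz).comp (hf.comp (differentiableOn_mobius hz')
      (mapsTo_mobius_ball hz')) (hmaps.comp (mapsTo_mobius_ball hz'))
  have hg0 : g 0 = 0 := by simp only [g, Function.comp_apply, mobius_neg_zero, mobius_self]
  have := norm_le_norm_of_mapsTo_ball hg (hgmaps.mono_right ball_subset_closedBall) hg0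
    (norm_mobius_lt_one hz hw)
  simpa only [g, Function.comp_apply, mobius_neg_mobius hz hw] using this

lemma norm_mobius_le {a w : ℂ} (ha : ‖a‖ < 1) (hw : ‖w‖ < 1) :
    ‖mobius a w‖ ≤ (‖a‖ + ‖w‖) / (1 + ‖a‖ * ‖w‖) := by
  have hden := norm_pos_iff.2 (one_sub_conj_mul_ne_zero ha hw.le)
  have hden_le : ‖1 - conj a * w‖ ≤ 1 + ‖a‖ * ‖w‖ := by
    simpa only [norm_one, norm_mul, norm_conj] using norm_sub_le (1 : ℂ) (conj a * w)
  have hkey := sq_norm_one_sub_conj_mul_sub_sq_norm_sub a w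
  rw [mobius, norm_div, div_le_div_iff₀ hden (by positivity)]
  have hP : 0 ≤ (1 - ‖a‖ ^ 2) * (1 - ‖w‖ ^ 2) := by
    apply mul_nonneg <;> nlinarith [norm_nonneg a, norm_nonneg w]
  have hD : ‖1 - conj a * w‖ ^ 2 ≤ (1 + ‖a‖ * ‖w‖) ^ 2 := pow_le_pow_left₀ hden.le hden_le 2
  refine (pow_le_pow_iff_left₀ (by positivity) (by positivity) two_ne_zero).1 ?_
  nlinarith [mul_nonneg hP (sub_nonneg.2 hD)]

lemma add_div_one_add_mul_le {u v r : ℝ} (hu : 0 ≤ u) (hv : 0 ≤ v) (hur : u ≤ r) (hvr : v ≤ r)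
    (hr : r ≤ 1) : (u + v) / (1 + u * v) ≤ 2 * r / (1 + r ^ 2) := by
  rw [div_le_div_iff₀ (by positivity) (by positivity)]
  nlinarith [mul_nonneg (sub_nonneg.2 hur) (sub_nonneg.2 (mul_le_one₀ hr hv (hvr.trans hr))),
    mul_nonneg (sub_nonneg.2 hvr) (sub_nonneg.2 (mul_le_one₀ hr hu (hur.trans hr)))]

lemma norm_one_sub_conj_mul_le {a : ℂ} (ha : ‖a‖ ≤ 1) (b : ℂ) :
    ‖1 - conj a * b‖ ≤ (1 - ‖a‖ ^ 2) + ‖a‖ * ‖a - b‖ := by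
  have hsplit : 1 - conj a * b = (1 - conj a * a) + conj a * (a - b) := by ring
  have hself : ‖1 - conj a * a‖ = 1 - ‖a‖ ^ 2 := by
    rw [mul_comm, mul_conj', ← ofReal_pow, ← ofReal_one, ← ofReal_sub, norm_real,
      Real.norm_of_nonneg (by nlinarith [norm_nonneg a])]
  calc ‖1 - conj a * b‖ ≤ ‖1 - conj a * a‖ + ‖conj a * (a - b)‖ := hsplit ▸ norm_add_le _ _
    _ = (1 - ‖a‖ ^ 2) + ‖a‖ * ‖a - b‖ := by rw [hself, norm_mul, norm_conj]

lemma norm_sub_le_of_norm_mobius_le {a b : ℂ} {s : ℝ} (ha : ‖a‖ < 1) (hb : ‖b‖ ≤ 1) (hs : s < 1)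
    (h : ‖mobius a b‖ ≤ s) : ‖a - b‖ ≤ 2 * s / (1 - s) * (1 - ‖a‖) := by
  have hs₀ : 0 ≤ s := (norm_nonneg _).trans h
  have hden := norm_pos_iff.2 (one_sub_conj_mul_ne_zero ha hb)
  rw [mobius, norm_div, div_le_iff₀ hden, norm_sub_rev] at h
  have hD : ‖a - b‖ ≤ s * ((1 - ‖a‖ ^ 2) + ‖a‖ * ‖a - b‖) :=
    h.trans (mul_le_mul_of_nonneg_left (norm_one_sub_conj_mul_le ha.le b) hs₀)
  rw [div_mul_eq_mul_div, le_div_iff₀ (sub_pos.2 hs)]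
  nlinarith [mul_nonneg (mul_nonneg hs₀ (norm_nonneg (a - b))) (sub_nonneg.2 ha.le),
    mul_nonneg (mul_nonneg hs₀ (sub_nonneg.2 ha.le)) (sub_nonneg.2 ha.le)]

lemma one_sub_norm_le_of_norm_mobius_le {a b : ℂ} {s : ℝ} (ha : ‖a‖ < 1) (hb : ‖b‖ ≤ 1)
    (hs : s < 1) (h : ‖mobius a b‖ ≤ s) : 1 - ‖b‖ ≤ (1 + s) / (1 - s) * (1 - ‖a‖) := by
  have hsub := norm_sub_le_of_norm_mobius_le ha hb hs h
  have hL : (1 + s) / (1 - s) = 1 + 2 * s / (1 - s) := by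
    field_simp [(sub_pos.2 hs).ne']
    ring
  rw [hL]
  linarith [norm_sub_norm_le a b]

theorem distortion_lemma_general (r : ℝ) (hr1 : r < 1)
    (f : ℂ → ℂ) (hf : DifferentiableOn ℂ f (Metric.ball 0 1))
    (hbd : ∀ z ∈ Metric.ball (0 : ℂ) 1, ‖f z‖ < 1)
    (z₁ z₂ : ℂ) (h₁ : ‖z₁‖ ≤ r) (h₂ : ‖z₂‖ ≤ r) :
    ‖f z₁ - f z₂‖ ≤
        2 * (2 * r / (1 + r ^ 2)) / (1 - 2 * r / (1 + r ^ 2)) *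
          (1 - ‖f z₁‖) ∧
      1 - ‖f z₂‖ ≤
        (1 + 2 * r / (1 + r ^ 2)) / (1 - 2 * r / (1 + r ^ 2)) *
          (1 - ‖f z₁‖) := by
  set s := 2 * r / (1 + r ^ 2)
  have hs : s < 1 := by
    rw [div_lt_one (by positivity)]
    nlinarith [sq_pos_of_pos (sub_pos.2 hr1)]
  have hz₁ : ‖z₁‖ < 1 := h₁.trans_lt hr1
  have hz₂ : ‖z₂‖ < 1 := h₂.trans_lt hr1
  have hfz₁ := hbd z₁ (mem_ball_zero_iff.2 hz₁)
  have hfz₂ := hbd z₂ (mem_ball_zero_iff.2 hz₂)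
  have hρ : ‖mobius (f z₁) (f z₂)‖ ≤ s :=
    calc ‖mobius (f z₁) (f z₂)‖ ≤ ‖mobius z₁ z₂‖ :=
          norm_mobius_apply_le_of_mapsTo_ball hf
            (fun z hz ↦ mem_ball_zero_iff.2 (hbd z hz)) hz₁ hz₂
      _ ≤ (‖z₁‖ + ‖z₂‖) / (1 + ‖z₁‖ * ‖z₂‖) := norm_mobius_le hz₁ hz₂
      _ ≤ s := add_div_one_add_mul_le (norm_nonneg _) (norm_nonneg _) h₁ h₂ hr1.le
  exact ⟨norm_sub_le_of_norm_mobius_le hfz₁ hfz₂.le hs hρ,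
    one_sub_norm_le_of_norm_mobius_le hfz₁ hfz₂.le hs hρ⟩

/-- Distortion lemma for Ueda's lemma: for a holomorphic `f` on the unit disc with
`|f| < 1` and points `z₁, z₂` in the closed subdisc of radius `r`, with
`s = 2r/(1+r²)`, `L₁ = 2s/(1-s)`, `L₂ = (1+s)/(1-s)`, one has
`|f z₁ - f z₂| ≤ L₁ (1 - |f z₁|)` and `1 - |f z₂| ≤ L₂ (1 - |f z₁|)`. -/
theorem distortion_lemma (r : ℝ) (hr0 : 0 < r) (hr1 : r < 1)
    (f : ℂ → ℂ) (hf : DifferentiableOn ℂ f (Metric.ball 0 1))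
    (hbd : ∀ z ∈ Metric.ball (0 : ℂ) 1, ‖f z‖ < 1)
    (z₁ z₂ : ℂ) (h₁ : ‖z₁‖ ≤ r) (h₂ : ‖z₂‖ ≤ r) :
    ‖f z₁ - f z₂‖ ≤
        2 * (2 * r / (1 + r ^ 2)) / (1 - 2 * r / (1 + r ^ 2)) *
          (1 - ‖f z₁‖) ∧
      1 - ‖f z₂‖ ≤
        (1 + 2 * r / (1 + r ^ 2)) / (1 - 2 * r / (1 + r ^ 2)) *
          (1 - ‖f z₁‖) :=
  distortion_lemma_general r hr1 f hf hbd z₁ z₂ h₁ h₂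
end

section
/- For every integer a ≥ 0, the polynomial S(t) = t⁶ − a·t⁵ − t⁴ + (2a−1)·t³ − t² − a·t + 1 has a complex root s with |s| = 1. -/
/-!
Put `s = e^{iθ}`. Since `S` is palindromic, `e^{-3iθ} S(e^{iθ})` is the real trigonometric polynomial
`2 cos 3θ - 2a cos 2θ - 2 cos θ + 2a - 1`, which equals `-1` at `θ = 0` and `3a + 2 ≥ 0` at
`θ = 2π/3`; the intermediate value theorem gives a zero in between.
-/

open Complex
open scoped Real

noncomputable def salemTrace (a θ : ℝ) : ℝ :=
  2 * Real.cos (3 * θ) - 2 * a * Real.cos (2 * θ) - 2 * Real.cos θ + 2 * a - 1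

lemma salemTrace_zero (a : ℝ) : salemTrace a 0 = -1 := by
  simp only [salemTrace, mul_zero, Real.cos_zero]
  ring

lemma salemTrace_two_pi_div_three (a : ℝ) : salemTrace a (2 * π / 3) = 3 * a + 2 := by
  have hc1 : Real.cos (2 * π / 3) = -(1 / 2) := by
    rw [show 2 * π / 3 = π - π / 3 by ring, Real.cos_pi_sub, Real.cos_pi_div_three]
  have hc2 : Real.cos (2 * (2 * π / 3)) = -(1 / 2) := by
    rw [show 2 * (2 * π / 3) = 2 * π - 2 * π / 3 by ring, Real.cos_two_pi_sub, hc1]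
  have hc3 : Real.cos (3 * (2 * π / 3)) = 1 := by
    rw [show 3 * (2 * π / 3) = 2 * π by ring, Real.cos_two_pi]
  rw [salemTrace, hc1, hc2, hc3]
  ring

lemma exists_salemTrace_eq_zero {a : ℝ} (ha : 0 ≤ 3 * a + 2) : ∃ θ, salemTrace a θ = 0 := by
  have hcont : Continuous (salemTrace a) := by unfold salemTrace; fun_prop
  have hzero : (0 : ℝ) ∈ Set.Icc (salemTrace a 0) (salemTrace a (2 * π / 3)) := by
    rw [salemTrace_zero, salemTrace_two_pi_div_three]
    exact ⟨by norm_num, ha⟩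
  obtain ⟨θ, -, hθ⟩ :=
    intermediate_value_Icc (by positivity : (0 : ℝ) ≤ 2 * π / 3) hcont.continuousOn hzero
  exact ⟨θ, hθ⟩

lemma two_cos_nat_mul_eq_exp_pow_add_inv (θ : ℝ) (k : ℕ) :
    2 * cos (k * θ) = exp (θ * I) ^ k + (exp (θ * I) ^ k)⁻¹ := by
  rw [two_cos, ← exp_nat_mul, ← exp_neg]
  ring_nf

def salemPoly (a s : ℂ) : ℂ :=
  s ^ 6 - a * s ^ 5 - s ^ 4 + (2 * a - 1) * s ^ 3 - s ^ 2 - a * s + 1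

lemma salemPoly_exp_mul_I (a θ : ℝ) :
    salemPoly a (exp (θ * I)) = exp (θ * I) ^ 3 * salemTrace a θ := by
  have h1 := two_cos_nat_mul_eq_exp_pow_add_inv θ 1
  have h2 := two_cos_nat_mul_eq_exp_pow_add_inv θ 2
  have h3 := two_cos_nat_mul_eq_exp_pow_add_inv θ 3
  simp only [Nat.cast_one, one_mul, pow_one, Nat.cast_ofNat] at h1 h2 h3
  simp only [salemTrace, salemPoly]
  push_cast
  rw [mul_assoc 2 (a : ℂ), mul_left_comm 2 (a : ℂ), h1, h2, h3]
  field_simp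
  ring

/-- For every integer `a ≥ 0`, the polynomial
`t⁶ - a·t⁵ - t⁴ + (2a-1)·t³ - t² - a·t + 1` has a root on the unit circle. -/
theorem salem_factor_unimodular_root (a : ℤ) (ha : 0 ≤ a) :
    ∃ s : ℂ, s ^ 6 - (a : ℂ) * s ^ 5 - s ^ 4 + (2 * (a : ℂ) - 1) * s ^ 3
        - s ^ 2 - (a : ℂ) * s + 1 = 0 ∧ ‖s‖ = 1 := by
  obtain ⟨θ, hθ⟩ := exists_salemTrace_eq_zero (a := a) (by positivity)
  refine ⟨exp (θ * I), ?_, norm_exp_ofReal_mul_I θ⟩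
  have hroot := salemPoly_exp_mul_I a θ
  rw [hθ, ofReal_zero, mul_zero, ofReal_intCast] at hroot
  exact hroot
end
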